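/- arXiv:1811.09884 — 3 statements merged into one kernel-verified Lean document; each statement's English description precedes it below -/
import Mathlib

section
/- For a real number a ≠ 0, the improper integral over ω from 0 to ∞ of ln((ω² + a²)/ω²) dω equals π|a|. -/
open MeasureTheory Real Filter Set Topology

/-! For `b > 0` the function `F x = x * log ((x² + b²) / x²) + 2 b * arctan (x / b)` is a primitive
of the (nonnegative) integrand on `(0, ∞)`. It is continuous at `0` with `F 0 = 0`, because
`x * log x → 0`, and `F x → 0 + 2b · π/2 = π b` at infinity, because
`x * log (1 + b²/x²) ~ b²/x`. For `a = 0` the integrand vanishes. -/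

lemma log_sq_add_sq_div_sq_nonneg (b : ℝ) {x : ℝ} (hx : x ≠ 0) :
    0 ≤ log ((x ^ 2 + b ^ 2) / x ^ 2) :=
  log_nonneg <| (le_div_iff₀ (by positivity)).2 (by nlinarith [sq_nonneg b])

lemma mul_log_sq_add_sq_div_sq (b x : ℝ) :
    x * log ((x ^ 2 + b ^ 2) / x ^ 2) = x * log (x ^ 2 + b ^ 2) - 2 * (x * log x) := by
  rcases eq_or_ne x 0 with rfl | hx
  · simp
  · rw [log_div (by positivity) (by positivity), log_pow]
    push_cast
    ring

lemma continuous_mul_log_sq_add_sq_div_sq {b : ℝ} (hb : b ≠ 0) :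
    Continuous fun x : ℝ ↦ x * log ((x ^ 2 + b ^ 2) / x ^ 2) := by
  simp_rw [mul_log_sq_add_sq_div_sq]
  have : Continuous fun x : ℝ ↦ log (x ^ 2 + b ^ 2) :=
    (by fun_prop : Continuous fun x : ℝ ↦ x ^ 2 + b ^ 2).log fun x ↦ by positivity
  exact (continuous_id.mul this).sub (continuous_mul_log.const_mul 2)

lemma hasDerivAt_mul_log_sq_add_sq_div_sq (b : ℝ) {x : ℝ} (hx : x ≠ 0) :
    HasDerivAt (fun x ↦ x * log ((x ^ 2 + b ^ 2) / x ^ 2))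
      (log ((x ^ 2 + b ^ 2) / x ^ 2) - 2 * b ^ 2 / (x ^ 2 + b ^ 2)) x := by
  have hquot : HasDerivAt (fun x ↦ (x ^ 2 + b ^ 2) / x ^ 2) (-2 * b ^ 2 / x ^ 3) x :=
    (((hasDerivAt_pow 2 x).add_const (b ^ 2)).div (hasDerivAt_pow 2 x) (by positivity)).congr_deriv
      (by field_simp; ring)
  refine ((hasDerivAt_id' x).mul (hquot.log (by positivity))).congr_deriv ?_
  field_simp
  ring

lemma tendsto_mul_log_sq_add_sq_div_sq_atTop (b : ℝ) :
    Tendsto (fun x : ℝ ↦ x * log ((x ^ 2 + b ^ 2) / x ^ 2)) atTop (𝓝 0) := by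
  have hsq : Tendsto (fun x : ℝ ↦ x ^ 2 * log (1 + b ^ 2 / x ^ 2)) atTop (𝓝 (b ^ 2)) :=
    (tendsto_mul_log_one_add_div_atTop (b ^ 2)).comp (tendsto_pow_atTop two_ne_zero)
  simpa using (hsq.mul tendsto_inv_atTop_zero).congr' <| by
    filter_upwards [eventually_gt_atTop 0] with x hx
    rw [add_div, div_self (by positivity)]
    field_simp

lemma tendsto_mul_arctan_div_atTop {b : ℝ} (hb : 0 < b) :
    Tendsto (fun x ↦ 2 * b * arctan (x / b)) atTop (𝓝 (π * b)) := by
  have := ((tendsto_arctan_atTop.mono_right nhdsWithin_le_nhds).comp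
    (tendsto_id.atTop_div_const hb)).const_mul (2 * b)
  rwa [show π * b = 2 * b * (π / 2) by ring]

theorem integral_Ioi_log_sq_add_sq_div_sq {b : ℝ} (hb : 0 < b) :
    ∫ x in Ioi 0, log ((x ^ 2 + b ^ 2) / x ^ 2) = π * b := by
  have hcont : Continuous fun x ↦ x * log ((x ^ 2 + b ^ 2) / x ^ 2) + 2 * b * arctan (x / b) :=
    (continuous_mul_log_sq_add_sq_div_sq hb.ne').add (by fun_prop)
  have hderiv (x : ℝ) (hx : x ∈ Ioi 0) : HasDerivAt
      (fun x ↦ x * log ((x ^ 2 + b ^ 2) / x ^ 2) + 2 * b * arctan (x / b))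
      (log ((x ^ 2 + b ^ 2) / x ^ 2)) x := by
    refine ((hasDerivAt_mul_log_sq_add_sq_div_sq b (ne_of_gt hx)).add
      (((hasDerivAt_id' x).div_const b).arctan.const_mul (2 * b))).congr_deriv ?_
    field_simp
    ring
  simpa using integral_Ioi_of_hasDerivAt_of_nonneg hcont.continuousWithinAt hderiv
    (fun x hx ↦ log_sq_add_sq_div_sq_nonneg b (ne_of_gt hx))
    (by simpa using
      (tendsto_mul_log_sq_add_sq_div_sq_atTop b).add (tendsto_mul_arctan_div_atTop hb))

theorem sensitivity_bode_key_integral_general (a : ℝ) :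
    ∫ ω in Set.Ioi (0 : ℝ), Real.log ((ω^2 + a^2) / ω^2) = π * |a| := by
  rcases eq_or_ne a 0 with rfl | ha
  · simp
  · simpa only [sq_abs] using integral_Ioi_log_sq_add_sq_div_sq (abs_pos.2 ha)

theorem sensitivity_bode_key_integral (a : ℝ) (ha : a ≠ 0) :
    ∫ ω in Set.Ioi (0 : ℝ), Real.log ((ω^2 + a^2) / ω^2) = π * |a| :=
  sensitivity_bode_key_integral_general a
end

section
/- Let z₁,…,z_m and r₁,…,r_n be nonzero complex numbers closed under conjugation, each rᵢ with Re rᵢ < 0, and K ∈ ℝ with T(s) = K·∏ᵢ(s − zᵢ)/∏ᵢ(s − rᵢ) and K·∏ᵢ(−zᵢ) = ∏ᵢ(−rᵢ). Then (1/2π)·∫_{−∞}^{∞} ln|T(jω)| dω/ω² = (1/2)·[Σᵢ |Re zᵢ⁻¹| − Σᵢ |Re rᵢ⁻¹|]. -/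
/-!
Substituting `ω = -1/x` turns `dω/ω²` into `dx`, and the normalisation `T(0) = 1` turns
`log |T(-i/x)|` into `∑_z ψ_{z⁻¹}(x) - ∑_r ψ_{r⁻¹}(x)`, where
`ψ_{α+iβ}(x) = log |x - β + iα| - log |x|`. A single `ψ` decays only like `-β/x`, but zeros and
poles come in conjugate pairs, and the average of `ψ_{α+iβ}` and `ψ_{α-iβ}` is integrable.
It has an explicit primitive built from `x log x` and `arctan`, whose limits at `±∞` give
`∫ = π|α|`. Integrability holds because
`(α² + (x-β)²)(α² + (x+β)²) - x⁴ = 2(α² - β²)x² + (α² + β²)²`, so the average has constant sign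
for large `x` while its primitive converges.
-/

open MeasureTheory Real Complex Set Filter Topology

noncomputable section

-- `Real.log x = Real.log |x|`, so this is `log |x - β + iα| - log |x|` for every `x`.
def logFactor (α β x : ℝ) : ℝ := Real.log (α ^ 2 + (x - β) ^ 2) / 2 - Real.log x

def logFactorPrimitive (α β x : ℝ) : ℝ :=
  (x - β) * Real.log (α ^ 2 + (x - β) ^ 2) / 2 + α * Real.arctan ((x - β) / α) - x * Real.log x

def symmLogFactor (α β x : ℝ) : ℝ := (logFactor α β x + logFactor α (-β) x) / 2

def symmLogFactorPrimitive (α β x : ℝ) : ℝ :=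
  (logFactorPrimitive α β x + logFactorPrimitive α (-β) x) / 2

end

theorem mul_arctan_div_eq_abs (α y : ℝ) :
    α * Real.arctan (y / α) = |α| * Real.arctan (y / |α|) := by
  rcases abs_choice α with h | h <;> rw [h]
  rw [div_neg, Real.arctan_neg, neg_mul_neg]

theorem tendsto_mul_arctan_div_atTop_s11 (α β : ℝ) :
    Tendsto (fun R => α * Real.arctan ((R - β) / α)) atTop (𝓝 (π / 2 * |α|)) := by
  simp only [mul_arctan_div_eq_abs α, mul_comm (π / 2)]
  rcases (abs_nonneg α).eq_or_lt with h | h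
  · simp [← h]
  · refine tendsto_const_nhds.mul ((tendsto_arctan_atTop.mono_right nhdsWithin_le_nhds).comp ?_)
    exact (tendsto_atTop_add_const_right _ (-β) tendsto_id).atTop_div_const h

section LogFactor

variable (α β : ℝ)

theorem continuous_logFactorPrimitive : Continuous (logFactorPrimitive α β) := by
  have hlog : Continuous fun x : ℝ => (x - β) * Real.log (α ^ 2 + (x - β) ^ 2) := by
    rcases eq_or_ne α 0 with rfl | hα
    · have h : (fun x : ℝ => (x - β) * Real.log (0 ^ 2 + (x - β) ^ 2)) =
          fun x => 2 * ((x - β) * Real.log (x - β)) := by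
        ext x; rw [zero_pow two_ne_zero, zero_add, Real.log_pow]; push_cast; ring
      rw [h]
      exact continuous_const.mul (continuous_mul_log.comp (continuous_sub_right β))
    · exact (continuous_sub_right β).mul
        ((continuous_const.add ((continuous_sub_right β).pow 2)).log fun x =>
          (add_pos_of_pos_of_nonneg (sq_pos_of_ne_zero hα) (sq_nonneg _)).ne')
  exact ((hlog.div_const 2).add (continuous_const.mul
    (continuous_arctan.comp ((continuous_sub_right β).div_const α)))).sub continuous_mul_log

variable {α β} in
theorem hasDerivAt_logFactorPrimitive {x : ℝ} (hx : x ≠ 0) (hxβ : x ≠ β) :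
    HasDerivAt (logFactorPrimitive α β) (logFactor α β x) x := by
  have hA : α ^ 2 + (x - β) ^ 2 ≠ 0 := by
    have := sub_ne_zero.mpr hxβ; positivity
  have hsub : HasDerivAt (fun y : ℝ => y - β) 1 x := (hasDerivAt_id x).sub_const β
  have hA' : HasDerivAt (fun y : ℝ => α ^ 2 + (y - β) ^ 2) (2 * (x - β)) x := by
    simpa using (hsub.pow 2).const_add (α ^ 2)
  refine (((hsub.mul (hA'.log hA)).div_const 2).add ((hsub.div_const α).arctan.const_mul α)).sub
    (hasDerivAt_mul_log hx) |>.congr_deriv ?_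
  rcases eq_or_ne α 0 with rfl | hα <;>
  · simp only [logFactor]
    field_simp
    ring

theorem logFactor_neg (x : ℝ) : logFactor α (-β) (-x) = logFactor α β x := by
  simp only [logFactor, Real.log_neg_eq_log, show -x - -β = -(x - β) by ring, neg_sq]

theorem logFactorPrimitive_neg (x : ℝ) :
    logFactorPrimitive α (-β) (-x) = -logFactorPrimitive α β x := by
  simp only [logFactorPrimitive, Real.log_neg_eq_log, show -x - -β = -(x - β) by ring, neg_sq,
    neg_div, Real.arctan_neg]
  ring

theorem intervalIntegrable_logFactor (a b : ℝ) :
    IntervalIntegrable (logFactor α β) volume a b := by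
  have hmero : MeromorphicOn (fun x : ℝ => α ^ 2 + (x - β) ^ 2) (uIcc a b) :=
    fun x _ => (analyticAt_const.add ((analyticAt_id.sub analyticAt_const).pow 2)).meromorphicAt
  have hlog : IntervalIntegrable (fun x => Real.log (α ^ 2 + (x - β) ^ 2)) volume a b := by
    simpa [Real.norm_eq_abs, Real.log_abs] using hmero.intervalIntegrable_log_norm
  exact (hlog.div_const 2).sub intervalIntegral.intervalIntegrable_log'

theorem tendsto_logFactorPrimitive_add_mul_log :
    Tendsto (fun R => logFactorPrimitive α β R + β * Real.log R) atTop
      (𝓝 (π / 2 * |α| - β)) := by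
  -- `α² + (R - β)² = R² (1 + g R)`, so for large `R` the function is
  -- `(1 - β/R) * (R * log (1 + g R)) / 2 + α * arctan ((R - β) / α)`, while `R * g R → -2β`.
  set g : ℝ → ℝ := fun R => (α ^ 2 + β ^ 2 - 2 * β * R) / R ^ 2
  have hg : Tendsto (fun R => R * g R) atTop (𝓝 (-2 * β)) := by
    have : Tendsto (fun R : ℝ => (α ^ 2 + β ^ 2) / R - 2 * β) atTop (𝓝 (0 - 2 * β)) :=
      (tendsto_const_nhds.div_atTop tendsto_id).sub_const _
    rw [zero_sub, ← neg_mul] at this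
    refine this.congr' ?_
    filter_upwards [eventually_ne_atTop 0] with R hR
    simp only [g]
    field_simp
  have hratio : Tendsto (fun R : ℝ => 1 - β / R) atTop (𝓝 (1 - 0)) :=
    tendsto_const_nhds.sub (tendsto_const_nhds.div_atTop tendsto_id)
  have hlim := ((hratio.mul
    (tendsto_mul_log_one_add_of_tendsto hg)).div_const 2).add (tendsto_mul_arctan_div_atTop_s11 α β)
  rw [show (1 - 0) * (-2 * β) / 2 + π / 2 * |α| = π / 2 * |α| - β by ring] at hlim
  refine hlim.congr' ?_
  filter_upwards [eventually_gt_atTop |β|] with R hR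
  have hR0 : 0 < R := (abs_nonneg β).trans_lt hR
  have hsplit : α ^ 2 + (R - β) ^ 2 = R ^ 2 * (1 + g R) := by
    simp only [g]; field_simp; ring
  have h1g : 0 < 1 + g R := by
    have hA : 0 < α ^ 2 + (R - β) ^ 2 := by
      have := sub_pos.mpr ((le_abs_self β).trans_lt hR); positivity
    exact pos_of_mul_pos_right (hsplit ▸ hA) (sq_nonneg R)
  rw [logFactorPrimitive, hsplit, Real.log_mul (by positivity) h1g.ne', Real.log_pow]
  field_simp
  ring

end LogFactor

section SymmLogFactor

variable (α β : ℝ)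

theorem continuous_symmLogFactorPrimitive : Continuous (symmLogFactorPrimitive α β) :=
  ((continuous_logFactorPrimitive α β).add (continuous_logFactorPrimitive α (-β))).div_const 2

variable {α β} in
theorem hasDerivAt_symmLogFactorPrimitive {x : ℝ} (hx : x ≠ 0) (hxβ : x ≠ β) (hxβ' : x ≠ -β) :
    HasDerivAt (symmLogFactorPrimitive α β) (symmLogFactor α β x) x :=
  ((hasDerivAt_logFactorPrimitive hx hxβ).add (hasDerivAt_logFactorPrimitive hx hxβ')).div_const 2

theorem symmLogFactorPrimitive_neg (x : ℝ) :
    symmLogFactorPrimitive α β (-x) = -symmLogFactorPrimitive α β x := by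
  have h := logFactorPrimitive_neg α (-β) x
  rw [neg_neg] at h
  simp only [symmLogFactorPrimitive, logFactorPrimitive_neg, h]
  ring

theorem symmLogFactor_neg (x : ℝ) : symmLogFactor α β (-x) = symmLogFactor α β x := by
  have h := logFactor_neg α (-β) x
  rw [neg_neg] at h
  simp only [symmLogFactor, logFactor_neg, h]
  ring

theorem intervalIntegrable_symmLogFactor (a b : ℝ) :
    IntervalIntegrable (symmLogFactor α β) volume a b :=
  ((intervalIntegrable_logFactor α β a b).add (intervalIntegrable_logFactor α (-β) a b)).div_const 2

theorem intervalIntegral_symmLogFactor (a b : ℝ) :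
    ∫ x in a..b, symmLogFactor α β x =
      symmLogFactorPrimitive α β b - symmLogFactorPrimitive α β a := by
  refine integral_eq_of_hasDerivAt_off_countable _ _ (s := {0, β, -β}) (toFinite _).countable
    (continuous_symmLogFactorPrimitive α β).continuousOn (fun x hx => ?_)
    (intervalIntegrable_symmLogFactor α β a b)
  simp only [Set.mem_sdiff, mem_insert_iff, mem_singleton_iff, not_or] at hx
  exact hasDerivAt_symmLogFactorPrimitive hx.2.1 hx.2.2.1 hx.2.2.2

theorem tendsto_symmLogFactorPrimitive :
    Tendsto (symmLogFactorPrimitive α β) atTop (𝓝 (π / 2 * |α|)) := by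
  have h := ((tendsto_logFactorPrimitive_add_mul_log α β).add
    (tendsto_logFactorPrimitive_add_mul_log α (-β))).div_const 2
  rw [show (π / 2 * |α| - β + (π / 2 * |α| - -β)) / 2 = π / 2 * |α| by ring] at h
  refine h.congr fun R => ?_
  simp only [symmLogFactorPrimitive]
  ring

variable {α β} in
theorem symmLogFactor_eq {x : ℝ} (hx : |β| < x) :
    symmLogFactor α β x =
      (Real.log ((α ^ 2 + (x - β) ^ 2) * (α ^ 2 + (x + β) ^ 2)) - Real.log (x ^ 4)) / 4 := by
  have h1 : 0 < x - β := sub_pos.mpr ((le_abs_self β).trans_lt hx)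
  have h2 : 0 < x + β := by linarith [neg_abs_le β]
  rw [symmLogFactor, logFactor, logFactor, sub_neg_eq_add,
    Real.log_mul (by positivity) (by positivity), Real.log_pow]
  push_cast
  ring

variable {α β} in
theorem symmLogFactor_nonneg {x : ℝ} (h : β ^ 2 ≤ α ^ 2) (hx : |β| < x) :
    0 ≤ symmLogFactor α β x := by
  have hx0 : 0 < x := (abs_nonneg β).trans_lt hx
  have hle : x ^ 4 ≤ (α ^ 2 + (x - β) ^ 2) * (α ^ 2 + (x + β) ^ 2) := by
    nlinarith [mul_nonneg (sub_nonneg.mpr h) (sq_nonneg x), sq_nonneg (α ^ 2 + β ^ 2)]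
  rw [symmLogFactor_eq hx]
  linarith [Real.log_le_log (by positivity) hle]

variable {α β} in
theorem symmLogFactor_nonpos {x : ℝ} (h : (α ^ 2 + β ^ 2) ^ 2 ≤ 2 * (β ^ 2 - α ^ 2) * x ^ 2)
    (hx : |β| < x) : symmLogFactor α β x ≤ 0 := by
  have h1 : 0 < x - β := sub_pos.mpr ((le_abs_self β).trans_lt hx)
  have h2 : 0 < x + β := by linarith [neg_abs_le β]
  have hle : (α ^ 2 + (x - β) ^ 2) * (α ^ 2 + (x + β) ^ 2) ≤ x ^ 4 := by nlinarith
  rw [symmLogFactor_eq hx]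
  linarith [Real.log_le_log (by positivity) hle]

theorem integrableOn_Ioi_symmLogFactor :
    ∃ c, 0 ≤ c ∧ IntegrableOn (symmLogFactor α β) (Ioi c) := by
  have hderiv : ∀ c, |β| ≤ c → ∀ x ∈ Ioi c,
      HasDerivAt (symmLogFactorPrimitive α β) (symmLogFactor α β x) x := by
    intro c hc x hx
    obtain ⟨h1, h2⟩ := abs_lt.mp (hc.trans_lt hx)
    exact hasDerivAt_symmLogFactorPrimitive (by linarith) (by linarith) (by linarith)
  have hcont : ∀ c, ContinuousWithinAt (symmLogFactorPrimitive α β) (Ici c) c :=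
    fun c => (continuous_symmLogFactorPrimitive α β).continuousWithinAt
  rcases le_or_gt (β ^ 2) (α ^ 2) with h | h
  · exact ⟨|β|, abs_nonneg β, integrableOn_Ioi_deriv_of_nonneg (hcont _) (hderiv _ le_rfl)
      (fun x hx => symmLogFactor_nonneg h hx) (tendsto_symmLogFactorPrimitive α β)⟩
  · set Q := (α ^ 2 + β ^ 2) ^ 2 / (2 * (β ^ 2 - α ^ 2))
    have hd : 0 < 2 * (β ^ 2 - α ^ 2) := by linarith
    have hQ : 0 ≤ Q := by positivity
    have hc : |β| ≤ |β| + 1 + Q := by linarith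
    refine ⟨|β| + 1 + Q, by positivity, integrableOn_Ioi_deriv_of_nonpos (hcont _) (hderiv _ hc)
      (fun x hx => symmLogFactor_nonpos ?_ (hc.trans_lt hx)) (tendsto_symmLogFactorPrimitive α β)⟩
    have hx : |β| + 1 + Q < x := hx
    have hQx : Q ≤ x ^ 2 := by nlinarith [abs_nonneg β]
    calc (α ^ 2 + β ^ 2) ^ 2 = 2 * (β ^ 2 - α ^ 2) * Q := by rw [mul_div_cancel₀ _ hd.ne']
      _ ≤ 2 * (β ^ 2 - α ^ 2) * x ^ 2 := by gcongr

theorem integrable_symmLogFactor : Integrable (symmLogFactor α β) := by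
  obtain ⟨c, hc, hright⟩ := integrableOn_Ioi_symmLogFactor α β
  have hleft : IntegrableOn (symmLogFactor α β) (Iio (-c)) := by
    have h := IntegrableOn.comp_neg_Iio (c := -c) (by rwa [neg_neg])
    simpa only [symmLogFactor_neg] using h
  have hmid : IntegrableOn (symmLogFactor α β) (Icc (-c) c) :=
    (intervalIntegrable_iff_integrableOn_Icc_of_le (by linarith)).mp
      (intervalIntegrable_symmLogFactor α β (-c) c)
  rw [← integrableOn_univ, ← Iio_union_Ici (a := -c),
    ← Icc_union_Ioi_eq_Ici (b := c) (by linarith)]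
  exact hleft.union (hmid.union hright)

theorem integral_symmLogFactor : ∫ x, symmLogFactor α β x = π * |α| := by
  have h := intervalIntegral_tendsto_integral (integrable_symmLogFactor α β)
    tendsto_neg_atTop_atBot tendsto_id
  refine tendsto_nhds_unique h ?_
  have h' := (tendsto_symmLogFactorPrimitive α β).const_mul 2
  rw [show 2 * (π / 2 * |α|) = π * |α| by ring] at h'
  refine h'.congr fun R => ?_
  rw [intervalIntegral_symmLogFactor, symmLogFactorPrimitive_neg]
  simp only [id]
  ring

end SymmLogFactor

theorem integral_div_sq_eq_integral_comp_neg_inv (f : ℝ → ℝ) :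
    ∫ ω, f ω / ω ^ 2 = ∫ x, f (-x⁻¹) := by
  have hs : MeasurableSet ({0}ᶜ : Set ℝ) := (measurableSet_singleton 0).compl
  have hae : ({0}ᶜ : Set ℝ) =ᵐ[volume] univ := by
    rw [ae_eq_univ, compl_compl, measure_singleton]
  have hderiv : ∀ x ∈ ({0}ᶜ : Set ℝ), HasDerivWithinAt (fun y => -y⁻¹) ((x ^ 2)⁻¹) {0}ᶜ x :=
    fun x hx => by simpa using (hasDerivAt_inv hx).fun_neg.hasDerivWithinAt
  have hinj : InjOn (fun y : ℝ => -y⁻¹) {0}ᶜ := fun a _ b _ h => inv_injective (neg_injective h)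
  have himage : (fun y : ℝ => -y⁻¹) '' {0}ᶜ = {0}ᶜ := by
    have hinv : Function.Involutive fun y : ℝ => -y⁻¹ := fun y => by simp
    ext y
    simp [hinv.image_eq_preimage_symm]
  have h := integral_image_eq_integral_abs_deriv_smul hs hderiv hinj fun ω => f ω / ω ^ 2
  rw [himage, setIntegral_congr_set hae, setIntegral_congr_set hae, setIntegral_univ,
    setIntegral_univ] at h
  rw [h]
  refine integral_congr_ae ((Measure.ae_ne volume 0).mono fun x hx => ?_)
  simp only [smul_eq_mul, neg_sq, inv_pow, abs_inv, abs_pow, sq_abs]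
  field_simp

theorem log_norm_neg_inv_mul_I_sub_sub_log_norm {w : ℂ} {x : ℝ} (hw : w ≠ 0) (hx : x ≠ 0)
    (hs : ((-x⁻¹ : ℝ) : ℂ) * I ≠ w) :
    Real.log ‖((-x⁻¹ : ℝ) : ℂ) * I - w‖ - Real.log ‖w‖ = logFactor (w⁻¹).re (w⁻¹).im x := by
  set ξ : ℂ := x + I * w⁻¹
  have hsplit : ((-x⁻¹ : ℝ) : ℂ) * I - w = -(w / x) * ξ := by
    have : (x : ℂ) ≠ 0 := ofReal_ne_zero.mpr hx
    simp only [ξ]; push_cast; field_simp; ring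
  have hξ : ξ ≠ 0 := by
    rintro h
    rw [h, mul_zero, sub_eq_zero] at hsplit
    exact hs hsplit
  have hnormξ : ‖ξ‖ ^ 2 = (w⁻¹).re ^ 2 + (x - (w⁻¹).im) ^ 2 := by
    rw [Complex.sq_norm, normSq_apply]
    simp only [ξ, add_re, ofReal_re, mul_re, I_re, I_im, add_im, ofReal_im, mul_im]
    ring
  rw [hsplit, norm_mul, norm_neg, norm_div, norm_real, Real.norm_eq_abs,
    Real.log_mul (by positivity) (norm_ne_zero_iff.mpr hξ), Real.log_div (norm_ne_zero_iff.mpr hw)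
    (abs_ne_zero.mpr hx), Real.log_abs, logFactor, ← hnormξ, Real.log_pow]
  push_cast
  ring

theorem log_norm_mul_prod_div_prod {ι κ : Type*} [Fintype ι] [Fintype κ] {K s : ℂ} {z : ι → ℂ}
    {r : κ → ℂ} (hK : K ≠ 0) (hz : ∀ i, s ≠ z i) (hr : ∀ i, s ≠ r i) :
    Real.log ‖K * (∏ i, (s - z i)) / ∏ i, (s - r i)‖ =
      Real.log ‖K‖ + ∑ i, Real.log ‖s - z i‖ - ∑ i, Real.log ‖s - r i‖ := by
  have hz' : ∀ i ∈ Finset.univ, ‖s - z i‖ ≠ 0 :=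
    fun i _ => norm_ne_zero_iff.mpr (sub_ne_zero.mpr (hz i))
  have hr' : ∀ i ∈ Finset.univ, ‖s - r i‖ ≠ 0 :=
    fun i _ => norm_ne_zero_iff.mpr (sub_ne_zero.mpr (hr i))
  rw [norm_div, norm_mul, norm_prod, norm_prod,
    Real.log_div (mul_ne_zero (norm_ne_zero_iff.mpr hK) (Finset.prod_ne_zero_iff.mpr hz'))
      (Finset.prod_ne_zero_iff.mpr hr'),
    Real.log_mul (norm_ne_zero_iff.mpr hK) (Finset.prod_ne_zero_iff.mpr hz'),
    Real.log_prod hz', Real.log_prod hr']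

theorem log_norm_rational_neg_inv_mul_I {ι κ : Type*} [Fintype ι] [Fintype κ] {K : ℂ}
    {z : ι → ℂ} {r : κ → ℂ} (hK : K ≠ 0) (hz : ∀ i, z i ≠ 0) (hr : ∀ i, r i ≠ 0)
    (hT0 : K * ∏ i, -z i = ∏ i, -r i) {x : ℝ} (hx : x ≠ 0)
    (hxz : ∀ i, ((-x⁻¹ : ℝ) : ℂ) * I ≠ z i) (hxr : ∀ i, ((-x⁻¹ : ℝ) : ℂ) * I ≠ r i) :
    Real.log ‖K * (∏ i, (((-x⁻¹ : ℝ) : ℂ) * I - z i)) / ∏ i, (((-x⁻¹ : ℝ) : ℂ) * I - r i)‖ =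
      ∑ i, logFactor (z i)⁻¹.re (z i)⁻¹.im x - ∑ i, logFactor (r i)⁻¹.re (r i)⁻¹.im x := by
  have hzero : Real.log ‖K * (∏ i, (0 - z i)) / ∏ i, (0 - r i)‖ = 0 := by
    simp only [zero_sub]
    rw [hT0, div_self (Finset.prod_ne_zero_iff.mpr fun i _ => neg_ne_zero.mpr (hr i)), norm_one,
      Real.log_one]
  rw [log_norm_mul_prod_div_prod hK (fun i => (hz i).symm) (fun i => (hr i).symm)] at hzero
  simp only [zero_sub, norm_neg] at hzero
  simp only [← log_norm_neg_inv_mul_I_sub_sub_log_norm (hz _) hx (hxz _),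
    ← log_norm_neg_inv_mul_I_sub_sub_log_norm (hr _) hx (hxr _), Finset.sum_sub_distrib,
    log_norm_mul_prod_div_prod hK hxz hxr]
  linarith

theorem Fin.sum_comp_eq_of_map_ofFn_eq {α M : Type*} [AddCommMonoid M] {m : ℕ} {z : Fin m → α}
    {σ : α → α} (h : Multiset.map σ ↑(List.ofFn z) = ↑(List.ofFn z)) (F : α → M) :
    ∑ i, F (σ (z i)) = ∑ i, F (z i) := by
  simpa [List.map_ofFn, List.sum_ofFn, Function.comp_def] using
    congrArg (fun M => (M.map F).sum) h

theorem sum_logFactor_eq_sum_symmLogFactor {m : ℕ} {z : Fin m → ℂ}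
    (hz : Multiset.map (starRingEnd ℂ) ↑(List.ofFn z) = ↑(List.ofFn z)) (x : ℝ) :
    ∑ i, logFactor (z i)⁻¹.re (z i)⁻¹.im x = ∑ i, symmLogFactor (z i)⁻¹.re (z i)⁻¹.im x := by
  have h := Fin.sum_comp_eq_of_map_ofFn_eq hz fun w => logFactor w⁻¹.re w⁻¹.im x
  simp only [← map_inv₀, conj_re, conj_im] at h
  simp only [symmLogFactor, ← Finset.sum_div, Finset.sum_add_distrib, h]
  ring

theorem ae_neg_inv_mul_I_ne (w : ℂ) : ∀ᵐ x : ℝ, ((-x⁻¹ : ℝ) : ℂ) * I ≠ w := by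
  refine ae_iff.mpr (Set.Subsingleton.measure_zero (fun x hx y hy => ?_) _)
  simp only [ne_eq, not_not, Set.mem_ofPred_eq] at hx hy
  have := mul_right_cancel₀ I_ne_zero (hx.trans hy.symm)
  exact inv_injective (neg_injective (ofReal_injective this))

theorem continuous_time_CSBI_general (m n : ℕ) (K : ℝ)
    (z : Fin m → ℂ)
    (r : Fin n → ℂ) (hrstab : ∀ i, (r i).re < 0)
    (hzconj : Multiset.map (starRingEnd ℂ) ↑(List.ofFn z) = ↑(List.ofFn z))
    (hrconj : Multiset.map (starRingEnd ℂ) ↑(List.ofFn r) = ↑(List.ofFn r))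
    (T : ℂ → ℂ)
    (hT : ∀ s, T s = (K : ℂ) * (∏ i, (s - z i)) / (∏ i, (s - r i)))
    (hT0 : (K : ℂ) * (∏ i, (-(z i))) = ∏ i, (-(r i))) :
    (1 / (2 * π)) * ∫ ω : ℝ, Real.log ‖T ((ω : ℂ) * Complex.I)‖ / ω^2 =
      (1 / 2) * ((∑ i, |((z i)⁻¹).re|) - ∑ i, |((r i)⁻¹).re|) := by
  have hr : ∀ i, r i ≠ 0 := fun i h => (hrstab i).ne (by simp [h])
  obtain ⟨hK, hz⟩ : (K : ℂ) ≠ 0 ∧ ∀ i, z i ≠ 0 := by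
    have h : ∏ i, -r i ≠ 0 := Finset.prod_ne_zero_iff.mpr fun i _ => neg_ne_zero.mpr (hr i)
    rw [← hT0, mul_ne_zero_iff, Finset.prod_ne_zero_iff] at h
    exact ⟨h.1, fun i => neg_ne_zero.mp (h.2 i (Finset.mem_univ i))⟩
  have hae : (fun x : ℝ => Real.log ‖T (((-x⁻¹ : ℝ) : ℂ) * I)‖) =ᵐ[volume] fun x =>
      ∑ i, symmLogFactor (z i)⁻¹.re (z i)⁻¹.im x - ∑ i, symmLogFactor (r i)⁻¹.re (r i)⁻¹.im x := by
    filter_upwards [Measure.ae_ne volume 0, ae_all_iff.mpr fun i => ae_neg_inv_mul_I_ne (z i)]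
      with x hx hxz
    have hxr : ∀ i, ((-x⁻¹ : ℝ) : ℂ) * I ≠ r i := fun i h => by simpa [← h] using hrstab i
    rw [hT, log_norm_rational_neg_inv_mul_I hK hz hr hT0 hx hxz hxr,
      sum_logFactor_eq_sum_symmLogFactor hzconj, sum_logFactor_eq_sum_symmLogFactor hrconj]
  have hint : ∀ {k : ℕ} (w : Fin k → ℂ),
      Integrable fun x => ∑ i, symmLogFactor (w i)⁻¹.re (w i)⁻¹.im x :=
    fun w => integrable_finsetSum _ fun i _ => integrable_symmLogFactor _ _
  rw [integral_div_sq_eq_integral_comp_neg_inv, integral_congr_ae hae,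
    integral_sub (hint z) (hint r),
    integral_finsetSum _ fun i _ => integrable_symmLogFactor _ _,
    integral_finsetSum _ fun i _ => integrable_symmLogFactor _ _]
  simp only [integral_symmLogFactor, ← Finset.mul_sum]
  field_simp

theorem continuous_time_CSBI (m n : ℕ) (K : ℝ)
    (z : Fin m → ℂ) (hz : ∀ i, z i ≠ 0)
    (r : Fin n → ℂ) (hr : ∀ i, r i ≠ 0) (hrstab : ∀ i, (r i).re < 0)
    (hzconj : Multiset.map (starRingEnd ℂ) ↑(List.ofFn z) = ↑(List.ofFn z))
    (hrconj : Multiset.map (starRingEnd ℂ) ↑(List.ofFn r) = ↑(List.ofFn r))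
    (T : ℂ → ℂ)
    (hT : ∀ s, T s = (K : ℂ) * (∏ i, (s - z i)) / (∏ i, (s - r i)))
    (hT0 : (K : ℂ) * (∏ i, (-(z i))) = ∏ i, (-(r i))) :
    (1 / (2 * π)) * ∫ ω : ℝ, Real.log ‖T ((ω : ℂ) * Complex.I)‖ / ω^2 =
      (1 / 2) * ((∑ i, |((z i)⁻¹).re|) - ∑ i, |((r i)⁻¹).re|) :=
  continuous_time_CSBI_general m n K z r hrstab hzconj hrconj T hT hT0
end

section
/- Let L(z) = K·∏ᵢ₌₁ⁿ(z − zᵢ)/∏ᵢ₌₁ⁿ(z − pᵢ) with K real, K ≠ −1, and suppose ∏ᵢ(z − pᵢ) + K·∏ᵢ(z − zᵢ) = (1+K)·∏ᵢ₌₁ⁿ(z − rᵢ) with all |rᵢ| < 1. Then (1/2π)·∫_{−π}^{π} log₂|L(e^{jω})/(1 + L(e^{jω}))| dω = Σ_{i : |zᵢ| > 1} log₂|zᵢ| + log₂|K/(1+K)|. -/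
/-!
Multiplying out the loop equation gives, on the unit circle away from finitely many points,
`L / (1 + L) = K / (1 + K) · ∏ (s - zᵢ) / ∏ (s - rᵢ)`, so the integrand is
`log |K / (1 + K)| + log |∏ (s - zᵢ)| - log |∏ (s - rᵢ)|`. The mean of `log |q|` over the
unit circle is the logarithmic Mahler measure of `q`, which for `∏ (X - aᵢ)` is Jensen's
`∑ log⁺ |aᵢ|`: it vanishes for the closed-loop poles `rᵢ` inside the disc and leaves exactly the
zeros `zᵢ` outside it.
-/

open MeasureTheory Real Complex Filter

open Polynomial in
theorem circleAverage_log_norm_prod_sub {ι : Type*} (s : Finset ι) (a : ι → ℂ) :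
    circleAverage (fun x ↦ Real.log ‖∏ i ∈ s, (x - a i)‖) 0 1 = ∑ i ∈ s, log⁺ ‖a i‖ := by
  classical
  have hroots : (∏ i ∈ s, (X - C (a i))).roots = s.val.map a := by
    simpa [Multiset.map_map] using roots_multiset_prod_X_sub_C (s.val.map a)
  have h := logMahlerMeasure_eq_log_leadingCoeff_add_sum_log_roots (∏ i ∈ s, (X - C (a i)))
  rw [logMahlerMeasure_def, (monic_prod_X_sub_C a s).leadingCoeff, hroots] at h
  simpa [eval_prod, Multiset.map_map] using h

theorem circleIntegrable_log_norm_prod_sub {ι : Type*} (s : Finset ι) (a : ι → ℂ) :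
    CircleIntegrable (fun x ↦ Real.log ‖∏ i ∈ s, (x - a i)‖) 0 1 :=
  MeromorphicOn.circleIntegrable_log_norm fun x _ ↦
    (Differentiable.analyticAt (by fun_prop) x).meromorphicAt

theorem integral_neg_pi_pi_eq_circleAverage (f : ℂ → ℝ) :
    (1 / (2 * π)) * ∫ ω in (-π)..π, f (exp (ω * I)) = circleAverage f 0 1 := by
  rw [circleAverage_eq_integral_add (-π),
    intervalIntegral.integral_comp_add_right (fun θ ↦ f (circleMap 0 1 θ))]
  simp [circleMap, smul_eq_mul, two_mul]

theorem sum_filter_one_lt_log_eq_sum_posLog {ι : Type*} (s : Finset ι) {x : ι → ℝ}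
    (hx : ∀ i ∈ s, 0 ≤ x i) : ∑ i ∈ s with 1 < x i, Real.log (x i) = ∑ i ∈ s, log⁺ (x i) := by
  rw [Finset.sum_filter]
  refine Finset.sum_congr rfl fun i hi ↦ ?_
  have habs : |x i| = x i := abs_of_nonneg (hx i hi)
  split_ifs with h
  · rw [posLog_eq_log (by rw [habs]; exact h.le)]
  · rw [(posLog_eq_zero_iff _).2 (by rw [habs]; exact not_lt.1 h)]

theorem mul_div_div_one_add_mul_div_of_add_mul_eq {F : Type*} [Field F] {a b c k : F}
    (hb : b ≠ 0) (h : b + k * a = (1 + k) * c) :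
    k * a / b / (1 + k * a / b) = k / (1 + k) * (a / c) := by
  have hden : 1 + k * a / b = (1 + k) * c / b := by
    field_simp
    exact h
  rw [hden, div_div_div_cancel_right₀ hb, mul_div_mul_comm]

theorem log_norm_mul_prod_div_one_add_eq {ι : Type*} [Fintype ι] {K : ℝ} (hK0 : K ≠ 0)
    (hK : K ≠ -1) {z p r : ι → ℂ} {s : ℂ} (hp : ∀ i, p i ≠ s) (hz : ∀ i, z i ≠ s)
    (hr : ∀ i, r i ≠ s)
    (hpoly : (∏ i, (s - p i)) + (K : ℂ) * (∏ i, (s - z i)) = (1 + (K : ℂ)) * ∏ i, (s - r i)) :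
    Real.log ‖(K : ℂ) * (∏ i, (s - z i)) / (∏ i, (s - p i)) /
        (1 + (K : ℂ) * (∏ i, (s - z i)) / (∏ i, (s - p i)))‖ =
      Real.log |K / (1 + K)| + Real.log ‖∏ i, (s - z i)‖ - Real.log ‖∏ i, (s - r i)‖ := by
  have hprod (a : ι → ℂ) (ha : ∀ i, a i ≠ s) : ‖∏ i, (s - a i)‖ ≠ 0 :=
    norm_ne_zero_iff.2 (Finset.prod_ne_zero_iff.2 fun i _ ↦ sub_ne_zero.2 (ha i).symm)
  have hgain : |K / (1 + K)| ≠ 0 :=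
    abs_ne_zero.2 (div_ne_zero hK0 fun h ↦ hK (by linarith))
  have hnorm : ‖(K : ℂ) / (1 + K)‖ = |K / (1 + K)| := by
    rw [← Real.norm_eq_abs, ← Complex.norm_real]
    push_cast
    rfl
  rw [mul_div_div_one_add_mul_div_of_add_mul_eq (norm_ne_zero_iff.1 (hprod p hp)) hpoly,
    norm_mul, hnorm, norm_div, Real.log_mul hgain (div_ne_zero (hprod z hz) (hprod r hr)),
    Real.log_div (hprod z hz) (hprod r hr), add_sub_assoc]

theorem discrete_time_CSBI_biproper_general (n : ℕ) (K : ℝ) (hK0 : K ≠ 0) (hK : K ≠ -1)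
    (z : Fin n → ℂ)
    (p : Fin n → ℂ)
    (r : Fin n → ℂ) (hr : ∀ i, ‖r i‖ < 1)
    (L : ℂ → ℂ)
    (hL : ∀ s, L s = (K : ℂ) * (∏ i, (s - z i)) / (∏ i, (s - p i)))
    (hpoly : ∀ s : ℂ, (∏ i, (s - p i)) + (K : ℂ) * (∏ i, (s - z i)) =
        (1 + (K : ℂ)) * ∏ i, (s - r i)) :
    (1 / (2 * π)) * ∫ ω in (-π)..π,
        Real.logb 2 ‖L (Complex.exp ((ω : ℂ) * Complex.I)) /
          (1 + L (Complex.exp ((ω : ℂ) * Complex.I)))‖ =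
      (∑ i ∈ Finset.univ.filter (fun i => 1 < ‖z i‖),
        Real.logb 2 ‖z i‖) + Real.logb 2 |K / (1 + K)| := by
  have hsplit : (fun s ↦ Real.log ‖L s / (1 + L s)‖) =ᶠ[codiscreteWithin (Metric.sphere 0 |1|)]
      fun s ↦ Real.log |K / (1 + K)| + Real.log ‖∏ i, (s - z i)‖ - Real.log ‖∏ i, (s - r i)‖ := by
    filter_upwards [compl_finite_mem_codiscreteWithin
      ((Set.finite_range p).union ((Set.finite_range z).union (Set.finite_range r)))] with s hs
    simp only [Set.mem_compl_iff, Set.mem_union, Set.mem_range, not_or, not_exists] at hs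
    rw [hL]
    exact log_norm_mul_prod_div_one_add_eq hK0 hK hs.1 hs.2.1 hs.2.2 (hpoly s)
  have hR : circleAverage (fun s ↦ Real.log ‖∏ i, (s - r i)‖) 0 1 = 0 := by
    rw [circleAverage_log_norm_prod_sub]
    exact Finset.sum_eq_zero fun i _ ↦ (posLog_eq_zero_iff _).2 (by simpa using (hr i).le)
  have hlog : (1 / (2 * π)) * ∫ ω in (-π)..π, Real.log ‖L (exp (ω * I)) / (1 + L (exp (ω * I)))‖
      = Real.log |K / (1 + K)| + ∑ i, log⁺ ‖z i‖ := by
    have hconst := circleIntegrable_const (Real.log |K / (1 + K)|) 0 1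
    have hZ := circleIntegrable_log_norm_prod_sub Finset.univ z
    rw [integral_neg_pi_pi_eq_circleAverage (fun s ↦ Real.log ‖L s / (1 + L s)‖),
      circleAverage_congr_codiscreteWithin hsplit one_ne_zero,
      circleAverage_fun_sub (hconst.fun_add hZ) (circleIntegrable_log_norm_prod_sub Finset.univ r),
      circleAverage_fun_add hconst hZ, circleAverage_const, circleAverage_log_norm_prod_sub, hR,
      sub_zero]
  simp only [Real.logb, intervalIntegral.integral_div, ← Finset.sum_div,
    sum_filter_one_lt_log_eq_sum_posLog _ fun i _ ↦ norm_nonneg (z i)]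
  rw [mul_div_assoc', hlog]
  ring

theorem discrete_time_CSBI_biproper (n : ℕ) (K : ℝ) (hK0 : K ≠ 0) (hK : K ≠ -1)
    (z : Fin n → ℂ) (hz : ∀ i, z i ≠ 0)
    (p : Fin n → ℂ)
    (r : Fin n → ℂ) (hr : ∀ i, ‖r i‖ < 1)
    (L : ℂ → ℂ)
    (hL : ∀ s, L s = (K : ℂ) * (∏ i, (s - z i)) / (∏ i, (s - p i)))
    (hpoly : ∀ s : ℂ, (∏ i, (s - p i)) + (K : ℂ) * (∏ i, (s - z i)) =
        (1 + (K : ℂ)) * ∏ i, (s - r i)) :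
    (1 / (2 * π)) * ∫ ω in (-π)..π,
        Real.logb 2 ‖L (Complex.exp ((ω : ℂ) * Complex.I)) /
          (1 + L (Complex.exp ((ω : ℂ) * Complex.I)))‖ =
      (∑ i ∈ Finset.univ.filter (fun i => 1 < ‖z i‖),
        Real.logb 2 ‖z i‖) + Real.logb 2 |K / (1 + K)| :=
  discrete_time_CSBI_biproper_general n K hK0 hK z p r hr L hL hpoly
end
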